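/- For the choice P̃ = θI (θ > 0) and Λ diagonal with diagonal entries −σ_k < 0, the ratio λ_min(Q̃)/λ_max(P̃) with Q̃ = −(ΛᵀP̃ + P̃Λ) is maximal over all symmetric positive definite P, Q solving ΛᵀP + PΛ = −Q; specifically, for any such pair, λ_min(Q)/λ_max(P) ≤ 2 min_k σ_k. -/

import Mathlib

/-!
Compare the `(k, k)` entries of the Lyapunov equation at an index `k` minimising `σ`:
`Q k k = 2 σ_k P k k`. A diagonal entry of a Hermitian matrix is a convex combination of its
eigenvalues (the weights are the squared moduli of a row of the unitary eigenvector matrix), so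
`λ_min(Q) ≤ Q k k` and `P k k ≤ λ_max(P)`, and the ratio is at most `Q k k / P k k = 2 σ_k`.
-/

namespace Matrix

variable {n 𝕜 : Type*} [Fintype n] [DecidableEq n] [RCLike 𝕜]

theorem sum_norm_sq_apply_of_mem_unitaryGroup {U : Matrix n n 𝕜} (hU : U ∈ unitaryGroup n 𝕜)
    (k : n) : ∑ j, ‖U k j‖ ^ 2 = 1 := by
  have hkk := congrFun (congrFun (mem_unitaryGroup_iff.mp hU) k) k
  simp only [mul_apply, star_apply, RCLike.star_def, RCLike.mul_conj, one_apply_eq] at hkk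
  exact_mod_cast hkk

namespace IsHermitian

variable {A : Matrix n n 𝕜} (hA : A.IsHermitian)

theorem diag_eq_sum_eigenvalues_mul (k : n) :
    A k k = ∑ j, (hA.eigenvalues j * ‖(hA.eigenvectorUnitary : Matrix n n 𝕜) k j‖ ^ 2 : ℝ) := by
  conv_lhs => rw [hA.spectral_theorem, Unitary.conjStarAlgAut_apply]
  simp only [mul_apply, diagonal_apply, Function.comp_apply, mul_ite, mul_zero,
    Finset.sum_ite_eq', Finset.mem_univ, if_true, star_apply, RCLike.star_def]
  push_cast
  refine Finset.sum_congr rfl fun j _ => ?_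
  rw [← RCLike.mul_conj]
  ring

theorem iInf_eigenvalues_le_re_diag (k : n) : ⨅ i, hA.eigenvalues i ≤ RCLike.re (A k k) := by
  rw [hA.diag_eq_sum_eigenvalues_mul, RCLike.ofReal_re]
  calc ⨅ i, hA.eigenvalues i
      = ∑ j, (⨅ i, hA.eigenvalues i) * ‖(hA.eigenvectorUnitary : Matrix n n 𝕜) k j‖ ^ 2 := by
        rw [← Finset.mul_sum, sum_norm_sq_apply_of_mem_unitaryGroup hA.eigenvectorUnitary.2,
          mul_one]
    _ ≤ _ := by gcongr with j; exact Finite.ciInf_le _ j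

theorem re_diag_le_iSup_eigenvalues (k : n) : RCLike.re (A k k) ≤ ⨆ i, hA.eigenvalues i := by
  rw [hA.diag_eq_sum_eigenvalues_mul, RCLike.ofReal_re]
  calc _ ≤ ∑ j, (⨆ i, hA.eigenvalues i) * ‖(hA.eigenvectorUnitary : Matrix n n 𝕜) k j‖ ^ 2 := by
        gcongr with j; exact Finite.le_ciSup _ j
    _ = ⨆ i, hA.eigenvalues i := by
        rw [← Finset.mul_sum, sum_norm_sq_apply_of_mem_unitaryGroup hA.eigenvectorUnitary.2,
          mul_one]

end IsHermitian

theorem diagonal_mul_add_mul_diagonal_apply {R : Type*} [CommSemiring R] (d : n → R)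
    (P : Matrix n n R) (i j : n) :
    (diagonal d * P + P * diagonal d) i j = (d i + d j) * P i j := by
  rw [add_apply, diagonal_mul, mul_diagonal]
  ring

end Matrix

open Matrix

theorem ratio_le_two_sigma_min_general {n : ℕ}
    (σ : Fin n → ℝ)
    (P Q : Matrix (Fin n) (Fin n) ℝ)
    (hP : P.PosDef) (hQ : Q.PosDef)
    (hLyap : (Matrix.diagonal (fun k => -σ k))ᵀ * P + P * Matrix.diagonal (fun k => -σ k) = -Q) :
    (⨅ k, hQ.1.eigenvalues k) / (⨆ k, hP.1.eigenvalues k) ≤ 2 * ⨅ k, σ k := by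
  rcases isEmpty_or_nonempty (Fin n) with _ | _
  · -- empty infima and suprema of reals are `0`
    simp [Real.iInf_of_isEmpty]
  obtain ⟨k, hk⟩ := exists_eq_ciInf_of_finite (f := σ)
  have hQP : Q k k = 2 * σ k * P k k := by
    have hkk := congrFun (congrFun hLyap k) k
    rw [diagonal_transpose, diagonal_mul_add_mul_diagonal_apply, neg_apply] at hkk
    linarith
  have hPk : 0 < P k k := hP.diag_pos
  rw [← hk]
  calc _ ≤ Q k k / P k k :=
        div_le_div₀ hQ.diag_pos.le (hQ.1.iInf_eigenvalues_le_re_diag k) hPk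
          (hP.1.re_diag_le_iSup_eigenvalues k)
    _ = 2 * σ k := by rw [hQP]; field_simp

/-- For `Λ = diag(-σ₁,…,-σₙ)` with `σ_k > 0`, any symmetric positive definite
pair `P, Q` solving `Λᵀ P + P Λ = -Q` satisfies
`λ_min(Q)/λ_max(P) ≤ 2 min_k σ_k`, so the choice `P = θ I` is optimal. -/
theorem ratio_le_two_sigma_min {n : ℕ} (hn : 0 < n)
    (σ : Fin n → ℝ) (hσ : ∀ k, 0 < σ k)
    (P Q : Matrix (Fin n) (Fin n) ℝ)
    (hP : P.PosDef) (hQ : Q.PosDef)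
    (hLyap : (Matrix.diagonal (fun k => -σ k))ᵀ * P + P * Matrix.diagonal (fun k => -σ k) = -Q) :
    (⨅ k, hQ.1.eigenvalues k) / (⨆ k, hP.1.eigenvalues k) ≤ 2 * ⨅ k, σ k :=
  ratio_le_two_sigma_min_general σ P Q hP hQ hLyap
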